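/- Let M > 0 and let f : ℝ × ℝ^{d−1} → ℝ satisfy |f(t, x′) − f(s, y′)| ≤ M · max(√|t − s|, |x′ − y′|) for all (t, x′), (s, y′). Define Ω = {(t, x′, x^d) ∈ ℝ^{d+1} : x^d > f(t, x′)}. Then there exists a constant N = N(M) ≥ 1 such that for every X ∈ Ω, the parabolic distance from X to the topological boundary ∂Ω satisfies d(X) ≤ d⁻(X) ≤ N·d(X) and d(X) ≤ d⁺(X) ≤ N·d(X), where d(X) = inf{|Z − X|_P : Z ∈ ∂Ω}, d⁻(X) = inf{|Z − X|_P : Z = (s,z) ∈ ∂Ω, s ≤ t}, and d⁺(X) = inf{|Z − X|_P : Z = (s,z) ∈ ∂Ω, s ≥ t}. -/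

import Mathlib

/-!
The vertical foot `(t, x′, f (t, x′))` of `X = (t, x′, x^d)` lies on `∂Ω` at the same time `t`,
so it competes for both `d⁻(X)` and `d⁺(X)`, at distance `δ = x^d - f (t, x′)`. Conversely every
boundary point `Z` lies on the graph of `f`, so
`δ ≤ |x^d - z^d| + |f (s, z′) - f (t, x′)| ≤ (1 + M) |Z - X|_P`.
Hence `d ≤ d^± ≤ δ ≤ (1 + M) d`.
-/

noncomputable section

/-- The parabolic distance on `ℝ × ℝ^{d-1} × ℝ`, with Euclidean spatial norm. -/
def distP11 (dm1 : ℕ) (X Y : ℝ × EuclideanSpace ℝ (Fin dm1) × ℝ) : ℝ :=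
  max (Real.sqrt |X.1 - Y.1|)
    (Real.sqrt (‖X.2.1 - Y.2.1‖ ^ 2 + (X.2.2 - Y.2.2) ^ 2))

/-- `d(X)`: parabolic distance to the topological boundary of `Ω`. -/
def dFull (dm1 : ℕ) (Ω : Set (ℝ × EuclideanSpace ℝ (Fin dm1) × ℝ))
    (X : ℝ × EuclideanSpace ℝ (Fin dm1) × ℝ) : ℝ :=
  sInf {r : ℝ | ∃ Z ∈ frontier Ω, r = distP11 dm1 Z X}

/-- `d⁻(X)`: parabolic distance to boundary points with `s ≤ t`. -/
def dMinus (dm1 : ℕ) (Ω : Set (ℝ × EuclideanSpace ℝ (Fin dm1) × ℝ))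
    (X : ℝ × EuclideanSpace ℝ (Fin dm1) × ℝ) : ℝ :=
  sInf {r : ℝ | ∃ Z ∈ frontier Ω, Z.1 ≤ X.1 ∧ r = distP11 dm1 Z X}

/-- `d⁺(X)`: parabolic distance to boundary points with `s ≥ t`. -/
def dPlus (dm1 : ℕ) (Ω : Set (ℝ × EuclideanSpace ℝ (Fin dm1) × ℝ))
    (X : ℝ × EuclideanSpace ℝ (Fin dm1) × ℝ) : ℝ :=
  sInf {r : ℝ | ∃ Z ∈ frontier Ω, X.1 ≤ Z.1 ∧ r = distP11 dm1 Z X}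

open Set

theorem frontier_setOf_lt_snd {α : Type*} [TopologicalSpace α] {f : α → ℝ} (hf : Continuous f) :
    frontier {p : α × ℝ | f p.1 < p.2} = {p | f p.1 = p.2} := by
  refine (frontier_lt_subset_eq (f := fun p : α × ℝ => f p.1) (by fun_prop)
    continuous_snd).antisymm fun p hp => ?_
  have hopen : IsOpen {p : α × ℝ | f p.1 < p.2} :=
    isOpen_lt (hf.comp continuous_fst) continuous_snd
  rw [frontier, hopen.interior_eq]
  refine ⟨?_, fun h => (h : f p.1 < p.2).ne hp⟩
  have hvert : ContinuousAt (fun s : ℝ => (p.1, s)) p.2 := by fun_prop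
  refine closure_mono ?_ (mem_closure_image hvert (by simp : p.2 ∈ closure (Ioi p.2)))
  rintro _ ⟨s, hs, rfl⟩
  exact (show f p.1 = p.2 from hp).trans_lt hs

theorem frontier_setOf_lt_graph {α β : Type*} [TopologicalSpace α] [TopologicalSpace β]
    {f : α × β → ℝ} (hf : Continuous f) :
    frontier {X : α × β × ℝ | f (X.1, X.2.1) < X.2.2} = {X | f (X.1, X.2.1) = X.2.2} := by
  have := (Homeomorph.prodAssoc α β ℝ).symm.preimage_frontier {p | f p.1 < p.2}
  rw [frontier_setOf_lt_snd hf] at this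
  exact this.symm

theorem csInf_le_csInf_and_le_mul_csInf {S T : Set ℝ} {a N : ℝ} (hN : 0 < N)
    (hT : ∀ r ∈ T, a ≤ N * r) (haS : a ∈ S) (hST : S ⊆ T) :
    sInf T ≤ sInf S ∧ sInf S ≤ N * sInf T := by
  have hlow : ∀ r ∈ T, a / N ≤ r := fun r hr => (div_le_iff₀' hN).2 (hT r hr)
  have hbdd : BddBelow T := ⟨a / N, hlow⟩
  exact ⟨csInf_le_csInf hbdd ⟨a, haS⟩ hST,
    (csInf_le (hbdd.mono hST) haS).trans ((div_le_iff₀' hN).1 (le_csInf ⟨a, hST haS⟩ hlow))⟩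

def ParabolicLipschitzWith {E : Type*} [SeminormedAddCommGroup E] (M : ℝ) (f : ℝ × E → ℝ) :
    Prop :=
  ∀ p q : ℝ × E, |f p - f q| ≤ M * max (Real.sqrt |p.1 - q.1|) ‖p.2 - q.2‖

namespace ParabolicLipschitzWith

variable {E : Type*} [SeminormedAddCommGroup E] {M : ℝ} {f : ℝ × E → ℝ}

theorem continuous (hf : ParabolicLipschitzWith M f) : Continuous f := by
  refine continuous_iff_continuousAt.2 fun p => tendsto_iff_dist_tendsto_zero.2 ?_
  have hbound : Continuous fun q : ℝ × E => M * max (Real.sqrt |q.1 - p.1|) ‖q.2 - p.2‖ := by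
    fun_prop
  exact squeeze_zero (fun _ => dist_nonneg) (fun q => hf q p) (by simpa using hbound.tendsto p)

theorem nonneg (hf : ParabolicLipschitzWith M f) : 0 ≤ M := by
  simpa using (abs_nonneg _).trans (hf (1, 0) (0, 0))

end ParabolicLipschitzWith

theorem distP11_vertical (dm1 : ℕ) (X : ℝ × EuclideanSpace ℝ (Fin dm1) × ℝ) (y : ℝ) :
    distP11 dm1 (X.1, X.2.1, y) X = |y - X.2.2| := by
  simp [distP11, Real.sqrt_sq_eq_abs]

theorem sub_le_mul_distP11_of_graph {dm1 : ℕ} {M : ℝ} {f : ℝ × EuclideanSpace ℝ (Fin dm1) → ℝ}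
    (hf : ParabolicLipschitzWith M f) {Z X : ℝ × EuclideanSpace ℝ (Fin dm1) × ℝ}
    (hZ : f (Z.1, Z.2.1) = Z.2.2) :
    X.2.2 - f (X.1, X.2.1) ≤ (1 + M) * distP11 dm1 Z X := by
  set r := distP11 dm1 Z X
  have hspace : ‖Z.2.1 - X.2.1‖ ≤ r :=
    le_max_of_le_right (Real.le_sqrt_of_sq_le (le_add_of_nonneg_right (sq_nonneg _)))
  have hvert : |Z.2.2 - X.2.2| ≤ r :=
    le_max_of_le_right (Real.abs_le_sqrt (le_add_of_nonneg_left (sq_nonneg _)))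
  have hgraph : |f (Z.1, Z.2.1) - f (X.1, X.2.1)| ≤ M * r :=
    (hf _ _).trans (mul_le_mul_of_nonneg_left (max_le (le_max_left _ _) hspace) hf.nonneg)
  linarith [abs_le.1 hvert, abs_le.1 hgraph]

theorem stmt11_general (dm1 : ℕ) (M : ℝ)
    (f : ℝ × EuclideanSpace ℝ (Fin dm1) → ℝ)
    (hf : ∀ p q : ℝ × EuclideanSpace ℝ (Fin dm1),
      |f p - f q| ≤ M * max (Real.sqrt |p.1 - q.1|) ‖p.2 - q.2‖)
    (Ω : Set (ℝ × EuclideanSpace ℝ (Fin dm1) × ℝ))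
    (hΩ : Ω = {X | f (X.1, X.2.1) < X.2.2}) :
    ∃ N : ℝ, 1 ≤ N ∧ ∀ X ∈ Ω,
      dFull dm1 Ω X ≤ dMinus dm1 Ω X ∧ dMinus dm1 Ω X ≤ N * dFull dm1 Ω X ∧
      dFull dm1 Ω X ≤ dPlus dm1 Ω X ∧ dPlus dm1 Ω X ≤ N * dFull dm1 Ω X := by
  have hM : 0 ≤ M := ParabolicLipschitzWith.nonneg hf
  have hfront : frontier Ω = {Z | f (Z.1, Z.2.1) = Z.2.2} :=
    hΩ ▸ frontier_setOf_lt_graph (ParabolicLipschitzWith.continuous hf)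
  refine ⟨1 + M, by linarith, fun X hX => ?_⟩
  set foot : ℝ × EuclideanSpace ℝ (Fin dm1) × ℝ := (X.1, X.2.1, f (X.1, X.2.1))
  have hfoot : foot ∈ frontier Ω := hfront ▸ rfl
  have hfoot_dist : X.2.2 - f (X.1, X.2.1) = distP11 dm1 foot X := by
    rw [hΩ] at hX
    rw [distP11_vertical, abs_sub_comm, abs_of_pos (sub_pos.2 hX)]
  have hlow : ∀ r ∈ {r | ∃ Z ∈ frontier Ω, r = distP11 dm1 Z X},
      X.2.2 - f (X.1, X.2.1) ≤ (1 + M) * r := by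
    rintro _ ⟨Z, hZ, rfl⟩
    exact sub_le_mul_distP11_of_graph hf (hfront.subset hZ)
  have hN : (0 : ℝ) < 1 + M := by linarith
  have hminus : dFull dm1 Ω X ≤ dMinus dm1 Ω X ∧ dMinus dm1 Ω X ≤ (1 + M) * dFull dm1 Ω X :=
    csInf_le_csInf_and_le_mul_csInf hN hlow ⟨foot, hfoot, le_rfl, hfoot_dist⟩
      fun _ ⟨Z, hZ, _, hr⟩ => ⟨Z, hZ, hr⟩
  have hplus : dFull dm1 Ω X ≤ dPlus dm1 Ω X ∧ dPlus dm1 Ω X ≤ (1 + M) * dFull dm1 Ω X :=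
    csInf_le_csInf_and_le_mul_csInf hN hlow ⟨foot, hfoot, le_rfl, hfoot_dist⟩
      fun _ ⟨Z, hZ, _, hr⟩ => ⟨Z, hZ, hr⟩
  exact ⟨hminus.1, hminus.2, hplus.1, hplus.2⟩

/-- For a time-varying `H₁` graph domain `Ω = {x^d > f(t, x′)}` with constant `M`,
the one-sided parabolic distances to the boundary are comparable to the full
parabolic distance: `d(X) ≤ d⁻(X) ≤ N d(X)` and `d(X) ≤ d⁺(X) ≤ N d(X)`. -/
theorem stmt11 (dm1 : ℕ) (hd : 1 ≤ dm1) (M : ℝ) (hM : 0 < M)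
    (f : ℝ × EuclideanSpace ℝ (Fin dm1) → ℝ)
    (hf : ∀ p q : ℝ × EuclideanSpace ℝ (Fin dm1),
      |f p - f q| ≤ M * max (Real.sqrt |p.1 - q.1|) ‖p.2 - q.2‖)
    (Ω : Set (ℝ × EuclideanSpace ℝ (Fin dm1) × ℝ))
    (hΩ : Ω = {X | f (X.1, X.2.1) < X.2.2}) :
    ∃ N : ℝ, 1 ≤ N ∧ ∀ X ∈ Ω,
      dFull dm1 Ω X ≤ dMinus dm1 Ω X ∧ dMinus dm1 Ω X ≤ N * dFull dm1 Ω X ∧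
      dFull dm1 Ω X ≤ dPlus dm1 Ω X ∧ dPlus dm1 Ω X ≤ N * dFull dm1 Ω X :=
  stmt11_general dm1 M f hf Ω hΩ

end
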